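/- The autoinformation gap upper-bounds the conditional mutual information between x_t and x_{t+τ} given the representation: AI(x_t; τ) − AI(z_t; τ) ≥ I(x_t; x_{t+τ} | z_t), and symmetrically ≥ I(x_t; x_{t+τ} | z_{t+τ}). -/

import Mathlib

open Finset

/-- Probability mass function of a random variable `X : Ω → α` under the weight `μ`. -/
def pmfOf {Ω α : Type} [Fintype Ω] [DecidableEq α] (μ : Ω → ℝ) (X : Ω → α) (a : α) : ℝ :=
  ∑ ω ∈ Finset.univ.filter (fun ω => X ω = a), μ ω

/-- `μ` is a probability mass function on the finite sample space `Ω`. -/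
def IsPMF {Ω : Type} [Fintype Ω] (μ : Ω → ℝ) : Prop :=
  (∀ ω, 0 ≤ μ ω) ∧ ∑ ω, μ ω = 1

/-- Mutual information `I(X; Y)` of two finite-valued random variables. -/
noncomputable def mi {Ω α β : Type} [Fintype Ω] [Fintype α] [DecidableEq α]
    [Fintype β] [DecidableEq β] (μ : Ω → ℝ) (X : Ω → α) (Y : Ω → β) : ℝ :=
  ∑ a : α, ∑ b : β,
    pmfOf μ (fun ω => (X ω, Y ω)) (a, b) *
      Real.log (pmfOf μ (fun ω => (X ω, Y ω)) (a, b) / (pmfOf μ X a * pmfOf μ Y b))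

/-- Conditional mutual information `I(X; Y | Z)` of finite-valued random variables. -/
noncomputable def cmi {Ω α β γ : Type} [Fintype Ω] [Fintype α] [DecidableEq α]
    [Fintype β] [DecidableEq β] [Fintype γ] [DecidableEq γ]
    (μ : Ω → ℝ) (X : Ω → α) (Y : Ω → β) (Z : Ω → γ) : ℝ :=
  ∑ a : α, ∑ b : β, ∑ c : γ,
    pmfOf μ (fun ω => (X ω, Y ω, Z ω)) (a, b, c) *
      Real.log (pmfOf μ (fun ω => (X ω, Y ω, Z ω)) (a, b, c) * pmfOf μ Z c /
        (pmfOf μ (fun ω => (X ω, Z ω)) (a, c) * pmfOf μ (fun ω => (Y ω, Z ω)) (b, c)))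

/-- Conditional pmf `P(X = a | Y = b)`. -/
noncomputable def condPMF {Ω α β : Type} [Fintype Ω] [DecidableEq α] [DecidableEq β]
    (μ : Ω → ℝ) (X : Ω → α) (Y : Ω → β) (a : α) (b : β) : ℝ :=
  pmfOf μ (fun ω => (X ω, Y ω)) (a, b) / pmfOf μ Y b

/-- Independence of two finite-valued random variables. -/
def IndepRV {Ω α β : Type} [Fintype Ω] [Fintype α] [DecidableEq α]
    [Fintype β] [DecidableEq β] (μ : Ω → ℝ) (X : Ω → α) (Y : Ω → β) : Prop :=
  ∀ a b, pmfOf μ (fun ω => (X ω, Y ω)) (a, b) = pmfOf μ X a * pmfOf μ Y b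

section Helpers
variable {Ω α β γ : Type} [Fintype Ω] [Fintype α] [DecidableEq α]

lemma pmfOf_nonneg {μ : Ω → ℝ} (hμ : ∀ ω, 0 ≤ μ ω) (X : Ω → α) (a : α) :
    0 ≤ pmfOf μ X a := Finset.sum_nonneg fun ω _ => hμ ω

set_option linter.unusedSectionVars false in
lemma pmfOf_congr [DecidableEq β] {μ : Ω → ℝ} {X : Ω → α} {Y : Ω → β} {a : α} {b : β}
    (h : ∀ ω, X ω = a ↔ Y ω = b) : pmfOf μ X a = pmfOf μ Y b := by
  unfold pmfOf; congr 1; ext ω; simp [h ω]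

set_option linter.unusedSectionVars false in
lemma pmfOf_le [DecidableEq β] {μ : Ω → ℝ} (hμ : ∀ ω, 0 ≤ μ ω) {X : Ω → α} {Y : Ω → β} {a : α} {b : β}
    (h : ∀ ω, X ω = a → Y ω = b) : pmfOf μ X a ≤ pmfOf μ Y b := by
  refine Finset.sum_le_sum_of_subset_of_nonneg ?_ fun ω _ _ => hμ ω
  intro ω hw
  simp only [Finset.mem_filter, Finset.mem_univ, true_and] at *
  exact h ω hw

lemma sum_pmfOf {μ : Ω → ℝ} (hμ : ∑ ω, μ ω = 1) (X : Ω → α) : ∑ a, pmfOf μ X a = 1 := by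
  unfold pmfOf
  rw [← hμ]
  simp only [Finset.sum_filter]
  rw [Finset.sum_comm]
  refine Finset.sum_congr rfl fun ω _ => ?_
  simp [Finset.sum_ite_eq]

lemma pmfOf_comp [Fintype γ] [DecidableEq γ] {μ : Ω → ℝ} (T : Ω → γ) (φ : γ → α) (a : α) :
    pmfOf μ (fun ω => φ (T ω)) a = ∑ t ∈ Finset.univ.filter (fun t => φ t = a), pmfOf μ T t := by
  unfold pmfOf
  conv_lhs => rw [Finset.sum_filter]
  conv_rhs => rw [Finset.sum_filter]
  have step : ∀ t : γ, (if φ t = a then ∑ ω ∈ Finset.univ.filter (fun ω => T ω = t), μ ω else 0)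
      = ∑ ω, if T ω = t then (if φ (T ω) = a then μ ω else 0) else 0 := by
    intro t
    rw [Finset.sum_filter] at *
    by_cases h : φ t = a
    · simp only [h, if_true]
      refine Finset.sum_congr rfl fun ω _ => ?_
      by_cases h2 : T ω = t <;> simp [h2, h]
    · simp only [h, if_false]
      symm; apply Finset.sum_eq_zero; intro ω _
      by_cases h2 : T ω = t <;> simp [h2, h]
  simp only [step]
  rw [Finset.sum_comm]
  refine Finset.sum_congr rfl fun ω _ => ?_
  simp [Finset.sum_ite_eq]

variable [Fintype β] [DecidableEq β] [Fintype γ] [DecidableEq γ] {μ : Ω → ℝ}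

lemma sum_pair_right (X : Ω → α) (Y : Ω → β) (a : α) :
    ∑ b, pmfOf μ (fun ω => (X ω, Y ω)) (a, b) = pmfOf μ X a := by
  have e : pmfOf μ X a
      = ∑ t ∈ Finset.univ.filter (fun t : α × β => t.1 = a), pmfOf μ (fun ω => (X ω, Y ω)) t :=
    pmfOf_comp (fun ω => (X ω, Y ω)) Prod.fst a
  rw [e, Finset.sum_filter, Fintype.sum_prod_type]
  conv_rhs => rw [Finset.sum_comm]
  simp [Finset.sum_ite_eq']

lemma sum_pair_left (X : Ω → α) (Y : Ω → β) (b : β) :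
    ∑ a, pmfOf μ (fun ω => (X ω, Y ω)) (a, b) = pmfOf μ Y b := by
  have e : pmfOf μ Y b
      = ∑ t ∈ Finset.univ.filter (fun t : α × β => t.2 = b), pmfOf μ (fun ω => (X ω, Y ω)) t :=
    pmfOf_comp (fun ω => (X ω, Y ω)) Prod.snd b
  rw [e, Finset.sum_filter, Fintype.sum_prod_type]
  simp [Finset.sum_ite_eq']

lemma sum_triple_mid (X : Ω → α) (Y : Ω → β) (Z : Ω → γ) (a : α) (c : γ) :
    ∑ b, pmfOf μ (fun ω => (X ω, Y ω, Z ω)) (a, b, c)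
      = pmfOf μ (fun ω => (X ω, Z ω)) (a, c) := by
  have e : pmfOf μ (fun ω => (X ω, Z ω)) (a, c)
      = ∑ t ∈ Finset.univ.filter (fun t : α × β × γ => (t.1, t.2.2) = (a, c)),
          pmfOf μ (fun ω => (X ω, Y ω, Z ω)) t :=
    pmfOf_comp (fun ω => (X ω, Y ω, Z ω)) (fun t => (t.1, t.2.2)) (a, c)
  rw [e, Finset.sum_filter]
  simp only [Fintype.sum_prod_type, Prod.mk.injEq, ite_and]
  simp [Finset.sum_ite_eq']

set_option linter.unusedSectionVars false in
lemma pmfOf_comp4 {α1 α2 α3 α4 : Type} [Fintype α1] [DecidableEq α1] [Fintype α2]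
    [DecidableEq α2] [Fintype α3] [DecidableEq α3] [Fintype α4] [DecidableEq α4]
    (W : Ω → α1 × α2 × α3 × α4) (φ : α1 × α2 × α3 × α4 → α) (v : α) :
    pmfOf μ (fun ω => φ (W ω)) v
      = ∑ t1, ∑ t2, ∑ t3, ∑ t4,
          if φ (t1, t2, t3, t4) = v then pmfOf μ W (t1, t2, t3, t4) else 0 := by
  rw [pmfOf_comp W φ v, Finset.sum_filter]
  simp only [Fintype.sum_prod_type]

/-- Swapping the components of the second argument of `mi`. -/
lemma mi_pair_comm (X : Ω → α) (Y : Ω → β) (Z : Ω → γ) :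
    mi μ X (fun ω => (Y ω, Z ω)) = mi μ X (fun ω => (Z ω, Y ω)) := by
  unfold mi
  refine Finset.sum_congr rfl fun a _ => ?_
  rw [Fintype.sum_prod_type, Fintype.sum_prod_type, Finset.sum_comm]
  refine Finset.sum_congr rfl fun c _ => Finset.sum_congr rfl fun b _ => ?_
  have h1 : pmfOf μ (fun ω => (X ω, Y ω, Z ω)) (a, b, c)
      = pmfOf μ (fun ω => (X ω, Z ω, Y ω)) (a, c, b) :=
    pmfOf_congr fun ω => by simp only [Prod.ext_iff]; tauto
  have h2 : pmfOf μ (fun ω => (Y ω, Z ω)) (b, c)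
      = pmfOf μ (fun ω => (Z ω, Y ω)) (c, b) :=
    pmfOf_congr fun ω => by simp only [Prod.ext_iff]; tauto
  rw [h1, h2]

/-- Symmetry of mutual information. -/
lemma mi_comm (X : Ω → α) (Y : Ω → β) : mi μ X Y = mi μ Y X := by
  unfold mi
  rw [Finset.sum_comm]
  refine Finset.sum_congr rfl fun b _ => Finset.sum_congr rfl fun a _ => ?_
  have hp : pmfOf μ (fun ω => (X ω, Y ω)) (a, b) = pmfOf μ (fun ω => (Y ω, X ω)) (b, a) :=
    pmfOf_congr fun ω => by simp [Prod.ext_iff, and_comm]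
  rw [hp, mul_comm (pmfOf μ X a)]

/-- Symmetry of conditional mutual information in its first two arguments. -/
lemma cmi_comm (X : Ω → α) (Y : Ω → β) (Z : Ω → γ) : cmi μ X Y Z = cmi μ Y X Z := by
  unfold cmi
  rw [Finset.sum_comm]
  refine Finset.sum_congr rfl fun b _ => Finset.sum_congr rfl fun a _ =>
    Finset.sum_congr rfl fun c _ => ?_
  have hp : pmfOf μ (fun ω => (X ω, Y ω, Z ω)) (a, b, c)
      = pmfOf μ (fun ω => (Y ω, X ω, Z ω)) (b, a, c) :=
    pmfOf_congr fun ω => by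
      simp only [Prod.ext_iff]
      tauto
  rw [hp, mul_comm (pmfOf μ (fun ω => (X ω, Z ω)) (a, c))]

/-- Chain rule : I(X;(Y,Z)) = I(X;Z) + I(X;Y|Z). -/
lemma mi_chain (hμ0 : ∀ ω, 0 ≤ μ ω) (X : Ω → α) (Y : Ω → β) (Z : Ω → γ) :
    mi μ X (fun ω => (Y ω, Z ω)) = mi μ X Z + cmi μ X Y Z := by
  unfold mi cmi
  simp only [Fintype.sum_prod_type]
  have e2 : ∀ a : α, (∑ c, pmfOf μ (fun ω => (X ω, Z ω)) (a, c) *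
        Real.log (pmfOf μ (fun ω => (X ω, Z ω)) (a, c) / (pmfOf μ X a * pmfOf μ Z c)))
      = ∑ b, ∑ c, pmfOf μ (fun ω => (X ω, Y ω, Z ω)) (a, b, c) *
        Real.log (pmfOf μ (fun ω => (X ω, Z ω)) (a, c) / (pmfOf μ X a * pmfOf μ Z c)) := by
    intro a
    rw [Finset.sum_comm]
    refine Finset.sum_congr rfl fun c _ => ?_
    rw [← sum_triple_mid X Y Z a c, Finset.sum_mul]
  simp only [e2, ← Finset.sum_add_distrib]
  refine Finset.sum_congr rfl fun a _ => Finset.sum_congr rfl fun b _ =>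
    Finset.sum_congr rfl fun c _ => ?_
  set P := pmfOf μ (fun ω => (X ω, Y ω, Z ω)) (a, b, c) with hP
  rcases (pmfOf_nonneg hμ0 (fun ω => (X ω, Y ω, Z ω)) (a, b, c)).eq_or_lt with h0 | hpos
  · rw [hP, ← h0]; ring
  · have hac : 0 < pmfOf μ (fun ω => (X ω, Z ω)) (a, c) :=
      lt_of_lt_of_le hpos (pmfOf_le hμ0 fun ω hh => by
        simp only [Prod.ext_iff] at hh ⊢; tauto)
    have hbc : 0 < pmfOf μ (fun ω => (Y ω, Z ω)) (b, c) :=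
      lt_of_lt_of_le hpos (pmfOf_le hμ0 fun ω hh => by
        simp only [Prod.ext_iff] at hh ⊢; tauto)
    have ha : 0 < pmfOf μ X a :=
      lt_of_lt_of_le hpos (pmfOf_le hμ0 fun ω hh => by
        simp only [Prod.ext_iff] at hh ⊢; tauto)
    have hc : 0 < pmfOf μ Z c :=
      lt_of_lt_of_le hpos (pmfOf_le hμ0 fun ω hh => by
        simp only [Prod.ext_iff] at hh ⊢; tauto)
    have hB : (0:ℝ) < pmfOf μ (fun ω => (X ω, Z ω)) (a, c) / (pmfOf μ X a * pmfOf μ Z c) :=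
      div_pos hac (mul_pos ha hc)
    have hC : (0:ℝ) < P * pmfOf μ Z c /
        (pmfOf μ (fun ω => (X ω, Z ω)) (a, c) * pmfOf μ (fun ω => (Y ω, Z ω)) (b, c)) :=
      div_pos (mul_pos hpos hc) (mul_pos hac hbc)
    have hA : P / (pmfOf μ X a * pmfOf μ (fun ω => (Y ω, Z ω)) (b, c))
        = (pmfOf μ (fun ω => (X ω, Z ω)) (a, c) / (pmfOf μ X a * pmfOf μ Z c)) *
          (P * pmfOf μ Z c /
            (pmfOf μ (fun ω => (X ω, Z ω)) (a, c) * pmfOf μ (fun ω => (Y ω, Z ω)) (b, c))) := by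
      field_simp
    rw [hA, Real.log_mul hB.ne' hC.ne']
    ring

/-- Conditional mutual information is nonnegative. -/
lemma cmi_nonneg (hμ : IsPMF μ) (X : Ω → α) (Y : Ω → β) (Z : Ω → γ) :
    0 ≤ cmi μ X Y Z := by
  obtain ⟨h0, h1⟩ := hμ
  have hQ0 : ∀ a b c, (0:ℝ) ≤ pmfOf μ (fun ω => (X ω, Z ω)) (a, c) *
      pmfOf μ (fun ω => (Y ω, Z ω)) (b, c) / pmfOf μ Z c := fun a b c =>
    div_nonneg (mul_nonneg (pmfOf_nonneg h0 _ _) (pmfOf_nonneg h0 _ _)) (pmfOf_nonneg h0 _ _)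
  have key : ∀ a b c,
      pmfOf μ (fun ω => (X ω, Y ω, Z ω)) (a, b, c)
        - pmfOf μ (fun ω => (X ω, Z ω)) (a, c) * pmfOf μ (fun ω => (Y ω, Z ω)) (b, c) /
            pmfOf μ Z c
      ≤ pmfOf μ (fun ω => (X ω, Y ω, Z ω)) (a, b, c) *
        Real.log (pmfOf μ (fun ω => (X ω, Y ω, Z ω)) (a, b, c) * pmfOf μ Z c /
          (pmfOf μ (fun ω => (X ω, Z ω)) (a, c) * pmfOf μ (fun ω => (Y ω, Z ω)) (b, c))) := by
    intro a b c
    set P := pmfOf μ (fun ω => (X ω, Y ω, Z ω)) (a, b, c) with hPdef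
    rcases (pmfOf_nonneg h0 (fun ω => (X ω, Y ω, Z ω)) (a, b, c)).eq_or_lt with hz | hpos
    · rw [hPdef, ← hz]
      simpa using hQ0 a b c
    · have hac : 0 < pmfOf μ (fun ω => (X ω, Z ω)) (a, c) :=
        lt_of_lt_of_le hpos (pmfOf_le h0 fun ω hh => by
          simp only [Prod.ext_iff] at hh ⊢; tauto)
      have hbc : 0 < pmfOf μ (fun ω => (Y ω, Z ω)) (b, c) :=
        lt_of_lt_of_le hpos (pmfOf_le h0 fun ω hh => by
          simp only [Prod.ext_iff] at hh ⊢; tauto)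
      have hc : 0 < pmfOf μ Z c :=
        lt_of_lt_of_le hpos (pmfOf_le h0 fun ω hh => by
          simp only [Prod.ext_iff] at hh ⊢; tauto)
      set Q := pmfOf μ (fun ω => (X ω, Z ω)) (a, c) *
        pmfOf μ (fun ω => (Y ω, Z ω)) (b, c) / pmfOf μ Z c with hQdef
      have hQpos : 0 < Q := div_pos (mul_pos hac hbc) hc
      have harg : P * pmfOf μ Z c /
          (pmfOf μ (fun ω => (X ω, Z ω)) (a, c) * pmfOf μ (fun ω => (Y ω, Z ω)) (b, c))
          = P / Q := by
        rw [hQdef]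
        field_simp
      rw [harg]
      have hlog : 1 - Q / P ≤ Real.log (P / Q) := by
        have := Real.log_le_sub_one_of_pos (div_pos hQpos hpos)
        have hinv : Real.log (Q / P) = - Real.log (P / Q) := by
          rw [Real.log_div hQpos.ne' hpos.ne', Real.log_div hpos.ne' hQpos.ne']; ring
        linarith
      have := mul_le_mul_of_nonneg_left hlog hpos.le
      calc P - Q = P * (1 - Q / P) := by have hP0 : P ≠ 0 := hpos.ne'; field_simp
        _ ≤ P * Real.log (P / Q) := this
  have hsumP : ∑ a : α, ∑ b : β, ∑ c : γ,
      pmfOf μ (fun ω => (X ω, Y ω, Z ω)) (a, b, c) = 1 := by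
    simpa only [Fintype.sum_prod_type] using sum_pmfOf h1 (fun ω => (X ω, Y ω, Z ω))
  have step : ∀ c : γ, ∑ a : α, ∑ b : β,
      (pmfOf μ (fun ω => (X ω, Z ω)) (a, c) * pmfOf μ (fun ω => (Y ω, Z ω)) (b, c) /
        pmfOf μ Z c) = pmfOf μ Z c := by
    intro c
    have e : ∑ a : α, ∑ b : β,
        (pmfOf μ (fun ω => (X ω, Z ω)) (a, c) * pmfOf μ (fun ω => (Y ω, Z ω)) (b, c) /
          pmfOf μ Z c)
        = (∑ a : α, pmfOf μ (fun ω => (X ω, Z ω)) (a, c)) *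
          (∑ b : β, pmfOf μ (fun ω => (Y ω, Z ω)) (b, c)) / pmfOf μ Z c := by
      rw [Finset.sum_mul, Finset.sum_div]
      refine Finset.sum_congr rfl fun a _ => ?_
      rw [Finset.mul_sum, Finset.sum_div]
    rw [e, sum_pair_left X Z c, sum_pair_left Y Z c]
    rcases eq_or_ne (pmfOf μ Z c) 0 with hz | hz
    · rw [hz]; simp
    · field_simp
  have hsumQ : ∑ a : α, ∑ b : β, ∑ c : γ,
      (pmfOf μ (fun ω => (X ω, Z ω)) (a, c) * pmfOf μ (fun ω => (Y ω, Z ω)) (b, c) /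
        pmfOf μ Z c) = 1 := by
    have swap1 : ∀ a : α, (∑ b : β, ∑ c : γ,
        (pmfOf μ (fun ω => (X ω, Z ω)) (a, c) * pmfOf μ (fun ω => (Y ω, Z ω)) (b, c) /
          pmfOf μ Z c))
        = ∑ c : γ, ∑ b : β,
        (pmfOf μ (fun ω => (X ω, Z ω)) (a, c) * pmfOf μ (fun ω => (Y ω, Z ω)) (b, c) /
          pmfOf μ Z c) := fun a => Finset.sum_comm
    simp only [swap1]
    rw [Finset.sum_comm]
    simp only [step]
    exact sum_pmfOf h1 Z
  have hle : ∑ a : α, ∑ b : β, ∑ c : γ,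
      (pmfOf μ (fun ω => (X ω, Y ω, Z ω)) (a, b, c)
        - pmfOf μ (fun ω => (X ω, Z ω)) (a, c) * pmfOf μ (fun ω => (Y ω, Z ω)) (b, c) /
            pmfOf μ Z c) ≤ cmi μ X Y Z := by
    unfold cmi
    refine Finset.sum_le_sum fun a _ => Finset.sum_le_sum fun b _ =>
      Finset.sum_le_sum fun c _ => key a b c
  refine le_trans (le_of_eq ?_) hle
  simp only [Finset.sum_sub_distrib]
  rw [hsumP, hsumQ]
  ring

/-- Conditional independence makes the cmi vanish. -/
lemma cmi_eq_zero (hμ0 : ∀ ω, 0 ≤ μ ω) {X : Ω → α} {Y : Ω → β} {Z : Ω → γ}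
    (h : ∀ a b c, pmfOf μ (fun ω => (X ω, Y ω, Z ω)) (a, b, c) * pmfOf μ Z c
        = pmfOf μ (fun ω => (X ω, Z ω)) (a, c) * pmfOf μ (fun ω => (Y ω, Z ω)) (b, c)) :
    cmi μ X Y Z = 0 := by
  unfold cmi
  refine Finset.sum_eq_zero fun a _ => Finset.sum_eq_zero fun b _ =>
    Finset.sum_eq_zero fun c _ => ?_
  rcases (pmfOf_nonneg hμ0 (fun ω => (X ω, Y ω, Z ω)) (a, b, c)).eq_or_lt with hz | hpos
  · rw [← hz, zero_mul]
  · have hac : 0 < pmfOf μ (fun ω => (X ω, Z ω)) (a, c) :=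
      lt_of_lt_of_le hpos (pmfOf_le hμ0 fun ω hh => by
        simp only [Prod.ext_iff] at hh ⊢; tauto)
    have hbc : 0 < pmfOf μ (fun ω => (Y ω, Z ω)) (b, c) :=
      lt_of_lt_of_le hpos (pmfOf_le hμ0 fun ω hh => by
        simp only [Prod.ext_iff] at hh ⊢; tauto)
    rw [h a b c, div_self (mul_pos hac hbc).ne', Real.log_one, mul_zero]

end Helpers
/-- **The autoinformation gap bounds conditional mutual information**:
`AI(x_t; τ) − AI(z_t; τ) ≥ I(x_t; x_{t+τ} | z_t)` and symmetrically
`AI(x_t; τ) − AI(z_t; τ) ≥ I(x_t; x_{t+τ} | z_{t+τ})`, where `z_t = f(x_t, ε_t)` and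
`z_{t+τ} = f(x_{t+τ}, ε_{t+τ})` are noisy functions with independent noise. -/
theorem autoinfo_gap_bounds_cmi {Ω A E Z : Type} [Fintype Ω]
    [Fintype A] [DecidableEq A] [Fintype E] [DecidableEq E] [Fintype Z] [DecidableEq Z]
    (μ : Ω → ℝ) (hμ : IsPMF μ)
    (x x' : Ω → A) (ε ε' : Ω → E) (f : A → E → Z)
    (hNoiseProc : IndepRV μ (fun ω => (ε ω, ε' ω)) (fun ω => (x ω, x' ω)))
    (hNoise : IndepRV μ ε ε') :
    cmi μ x x' (fun ω => f (x ω) (ε ω))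
        ≤ mi μ x x' - mi μ (fun ω => f (x ω) (ε ω)) (fun ω => f (x' ω) (ε' ω))
    ∧ cmi μ x x' (fun ω => f (x' ω) (ε' ω))
        ≤ mi μ x x' - mi μ (fun ω => f (x ω) (ε ω)) (fun ω => f (x' ω) (ε' ω)) := by

  obtain ⟨hμ0, hμ1⟩ := hμ
  classical
  set g : A → Z → ℝ := fun a c => ∑ e ∈ Finset.univ.filter (fun e => f a e = c), pmfOf μ ε e
    with hgdef
  set gh : A → Z → ℝ := fun b c => ∑ e ∈ Finset.univ.filter (fun e => f b e = c), pmfOf μ ε' e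
    with hghdef
  have hsum_g : ∀ a, ∑ c, g a c = 1 := by
    intro a
    simp only [hgdef]
    rw [Finset.sum_fiberwise]
    exact sum_pmfOf hμ1 ε
  have hsum_gh : ∀ b, ∑ c, gh b c = 1 := by
    intro b
    simp only [hghdef]
    rw [Finset.sum_fiberwise]
    exact sum_pmfOf hμ1 ε'
  have hT : ∀ a b e e', pmfOf μ (fun ω => (x ω, x' ω, ε ω, ε' ω)) (a, b, e, e')
      = pmfOf μ (fun ω => (x ω, x' ω)) (a, b) * pmfOf μ ε e * pmfOf μ ε' e' := by
    intro a b e e'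
    have e1 : pmfOf μ (fun ω => (x ω, x' ω, ε ω, ε' ω)) (a, b, e, e')
        = pmfOf μ (fun ω => ((ε ω, ε' ω), (x ω, x' ω))) ((e, e'), (a, b)) :=
      pmfOf_congr fun ω => by simp only [Prod.ext_iff]; tauto
    have e2 : pmfOf μ (fun ω => ((ε ω, ε' ω), (x ω, x' ω))) ((e, e'), (a, b))
        = pmfOf μ (fun ω => (ε ω, ε' ω)) (e, e') * pmfOf μ (fun ω => (x ω, x' ω)) (a, b) :=
      hNoiseProc (e, e') (a, b)
    rw [e1, e2, hNoise e e']
    ring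
  have hW : ∀ a b c c',
      pmfOf μ (fun ω => (x ω, x' ω, f (x ω) (ε ω), f (x' ω) (ε' ω))) (a, b, c, c')
        = pmfOf μ (fun ω => (x ω, x' ω)) (a, b) * g a c * gh b c' := by
    intro a b c c'
    have e1 : pmfOf μ (fun ω => (x ω, x' ω, f (x ω) (ε ω), f (x' ω) (ε' ω))) (a, b, c, c')
        = ∑ t1, ∑ t2, ∑ t3, ∑ t4,
            if (t1, t2, f t1 t3, f t2 t4) = (a, b, c, c')
            then pmfOf μ (fun ω => (x ω, x' ω, ε ω, ε' ω)) (t1, t2, t3, t4) else 0 :=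
      pmfOf_comp4 (fun ω => (x ω, x' ω, ε ω, ε' ω))
        (fun t => (t.1, t.2.1, f t.1 t.2.2.1, f t.2.1 t.2.2.2)) (a, b, c, c')
    rw [e1]
    simp only [Prod.mk.injEq, ite_and, hT]
    simp [Finset.sum_ite_eq']
    simp only [hgdef, hghdef, Finset.sum_filter]
    have expand : ∀ x1 : E, (if f a x1 = c then
        ∑ x2 : E, if f b x2 = c' then
          pmfOf μ (fun ω => (x ω, x' ω)) (a, b) * pmfOf μ ε x1 * pmfOf μ ε' x2 else 0 else 0)
        = pmfOf μ (fun ω => (x ω, x' ω)) (a, b) * ((if f a x1 = c then pmfOf μ ε x1 else 0) *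
            ∑ x2 : E, (if f b x2 = c' then pmfOf μ ε' x2 else 0)) := by
      intro x1
      by_cases h1 : f a x1 = c
      · simp only [h1, if_true]
        rw [Finset.mul_sum, Finset.mul_sum]
        refine Finset.sum_congr rfl fun x2 _ => ?_
        by_cases h2 : f b x2 = c' <;> simp [h2] <;> ring
      · simp [h1]
    simp only [expand]
    rw [← Finset.mul_sum, ← Finset.sum_mul]
    ring

  have hx'x : ∀ b a, pmfOf μ (fun ω => (x' ω, x ω)) (b, a)
      = pmfOf μ (fun ω => (x ω, x' ω)) (a, b) :=
    fun b a => pmfOf_congr fun ω => by simp only [Prod.ext_iff]; tauto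
  have L5 : ∀ c a, pmfOf μ (fun ω => (f (x ω) (ε ω), x ω)) (c, a)
      = g a c * pmfOf μ x a := by
    intro c a
    have e1 : pmfOf μ (fun ω => (f (x ω) (ε ω), x ω)) (c, a)
        = ∑ t1, ∑ t2, ∑ t3, ∑ t4, if ((t3 : Z), (t1 : A)) = (c, a)
            then pmfOf μ (fun ω => (x ω, x' ω, f (x ω) (ε ω), f (x' ω) (ε' ω))) (t1, t2, t3, t4)
            else 0 :=
      pmfOf_comp4 (fun ω => (x ω, x' ω, f (x ω) (ε ω), f (x' ω) (ε' ω)))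
        (fun t => (t.2.2.1, t.1)) (c, a)
    rw [e1]
    simp only [Prod.mk.injEq, ite_and, hW]
    simp [Finset.sum_ite_eq']
    rw [← sum_pair_right x x' a, Finset.mul_sum]
    refine Finset.sum_congr rfl fun t2 _ => ?_
    rw [← Finset.mul_sum, hsum_gh t2, mul_one]
    ring
  have L6 : ∀ b c a, pmfOf μ (fun ω => (x' ω, f (x ω) (ε ω), x ω)) (b, c, a)
      = g a c * pmfOf μ (fun ω => (x ω, x' ω)) (a, b) := by
    intro b c a
    have e1 : pmfOf μ (fun ω => (x' ω, f (x ω) (ε ω), x ω)) (b, c, a)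
        = ∑ t1, ∑ t2, ∑ t3, ∑ t4, if ((t2 : A), (t3 : Z), (t1 : A)) = (b, c, a)
            then pmfOf μ (fun ω => (x ω, x' ω, f (x ω) (ε ω), f (x' ω) (ε' ω))) (t1, t2, t3, t4)
            else 0 :=
      pmfOf_comp4 (fun ω => (x ω, x' ω, f (x ω) (ε ω), f (x' ω) (ε' ω)))
        (fun t => (t.2.1, t.2.2.1, t.1)) (b, c, a)
    rw [e1]
    simp only [Prod.mk.injEq, ite_and, hW]
    simp [Finset.sum_ite_eq']
    rw [← Finset.mul_sum, hsum_gh b, mul_one]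
    ring
  have L7 : ∀ c' b, pmfOf μ (fun ω => (f (x' ω) (ε' ω), x' ω)) (c', b)
      = gh b c' * pmfOf μ x' b := by
    intro c' b
    have e1 : pmfOf μ (fun ω => (f (x' ω) (ε' ω), x' ω)) (c', b)
        = ∑ t1, ∑ t2, ∑ t3, ∑ t4, if ((t4 : Z), (t2 : A)) = (c', b)
            then pmfOf μ (fun ω => (x ω, x' ω, f (x ω) (ε ω), f (x' ω) (ε' ω))) (t1, t2, t3, t4)
            else 0 :=
      pmfOf_comp4 (fun ω => (x ω, x' ω, f (x ω) (ε ω), f (x' ω) (ε' ω)))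
        (fun t => (t.2.2.2, t.2.1)) (c', b)
    rw [e1]
    simp only [Prod.mk.injEq, ite_and, hW]
    simp [Finset.sum_ite_eq']
    rw [← sum_pair_left x x' b, Finset.mul_sum]
    refine Finset.sum_congr rfl fun t1 _ => ?_
    rw [← Finset.sum_mul, ← Finset.mul_sum, hsum_g t1, mul_one]
    ring
  have L8 : ∀ c b, pmfOf μ (fun ω => (f (x ω) (ε ω), x' ω)) (c, b)
      = ∑ a, g a c * pmfOf μ (fun ω => (x ω, x' ω)) (a, b) := by
    intro c b
    have e1 : pmfOf μ (fun ω => (f (x ω) (ε ω), x' ω)) (c, b)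
        = ∑ t1, ∑ t2, ∑ t3, ∑ t4, if ((t3 : Z), (t2 : A)) = (c, b)
            then pmfOf μ (fun ω => (x ω, x' ω, f (x ω) (ε ω), f (x' ω) (ε' ω))) (t1, t2, t3, t4)
            else 0 :=
      pmfOf_comp4 (fun ω => (x ω, x' ω, f (x ω) (ε ω), f (x' ω) (ε' ω)))
        (fun t => (t.2.2.1, t.2.1)) (c, b)
    rw [e1]
    simp only [Prod.mk.injEq, ite_and, hW]
    simp [Finset.sum_ite_eq']
    refine Finset.sum_congr rfl fun t1 _ => ?_
    rw [← Finset.mul_sum, hsum_gh b, mul_one]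
    ring
  have L9 : ∀ c c' b, pmfOf μ (fun ω => (f (x ω) (ε ω), f (x' ω) (ε' ω), x' ω)) (c, c', b)
      = gh b c' * ∑ a, g a c * pmfOf μ (fun ω => (x ω, x' ω)) (a, b) := by
    intro c c' b
    have e1 : pmfOf μ (fun ω => (f (x ω) (ε ω), f (x' ω) (ε' ω), x' ω)) (c, c', b)
        = ∑ t1, ∑ t2, ∑ t3, ∑ t4, if ((t3 : Z), (t4 : Z), (t2 : A)) = (c, c', b)
            then pmfOf μ (fun ω => (x ω, x' ω, f (x ω) (ε ω), f (x' ω) (ε' ω))) (t1, t2, t3, t4)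
            else 0 :=
      pmfOf_comp4 (fun ω => (x ω, x' ω, f (x ω) (ε ω), f (x' ω) (ε' ω)))
        (fun t => (t.2.2.1, t.2.2.2, t.2.1)) (c, c', b)
    rw [e1]
    simp only [Prod.mk.injEq, ite_and, hW]
    simp [Finset.sum_ite_eq']
    rw [Finset.mul_sum]
    refine Finset.sum_congr rfl fun t1 _ => ?_
    ring
  have L10 : ∀ a c' b, pmfOf μ (fun ω => (x ω, f (x' ω) (ε' ω), x' ω)) (a, c', b)
      = gh b c' * pmfOf μ (fun ω => (x ω, x' ω)) (a, b) := by
    intro a c' b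
    have e1 : pmfOf μ (fun ω => (x ω, f (x' ω) (ε' ω), x' ω)) (a, c', b)
        = ∑ t1, ∑ t2, ∑ t3, ∑ t4, if ((t1 : A), (t4 : Z), (t2 : A)) = (a, c', b)
            then pmfOf μ (fun ω => (x ω, x' ω, f (x ω) (ε ω), f (x' ω) (ε' ω))) (t1, t2, t3, t4)
            else 0 :=
      pmfOf_comp4 (fun ω => (x ω, x' ω, f (x ω) (ε ω), f (x' ω) (ε' ω)))
        (fun t => (t.1, t.2.2.2, t.2.1)) (a, c', b)
    rw [e1]
    simp only [Prod.mk.injEq, ite_and, hW]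
    simp [Finset.sum_ite_eq']
    rw [← Finset.sum_mul, ← Finset.mul_sum, hsum_g a, mul_one]
    ring
  have L12 : ∀ c' c a, pmfOf μ (fun ω => (f (x' ω) (ε' ω), f (x ω) (ε ω), x ω)) (c', c, a)
      = g a c * ∑ b, gh b c' * pmfOf μ (fun ω => (x ω, x' ω)) (a, b) := by
    intro c' c a
    have e1 : pmfOf μ (fun ω => (f (x' ω) (ε' ω), f (x ω) (ε ω), x ω)) (c', c, a)
        = ∑ t1, ∑ t2, ∑ t3, ∑ t4, if ((t4 : Z), (t3 : Z), (t1 : A)) = (c', c, a)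
            then pmfOf μ (fun ω => (x ω, x' ω, f (x ω) (ε ω), f (x' ω) (ε' ω))) (t1, t2, t3, t4)
            else 0 :=
      pmfOf_comp4 (fun ω => (x ω, x' ω, f (x ω) (ε ω), f (x' ω) (ε' ω)))
        (fun t => (t.2.2.2, t.2.2.1, t.1)) (c', c, a)
    rw [e1]
    simp only [Prod.mk.injEq, ite_and, hW]
    simp [Finset.sum_ite_eq']
    rw [Finset.mul_sum]
    refine Finset.sum_congr rfl fun t2 _ => ?_
    ring
  have L13 : ∀ c' a, pmfOf μ (fun ω => (f (x' ω) (ε' ω), x ω)) (c', a)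
      = ∑ b, gh b c' * pmfOf μ (fun ω => (x ω, x' ω)) (a, b) := by
    intro c' a
    have e1 : pmfOf μ (fun ω => (f (x' ω) (ε' ω), x ω)) (c', a)
        = ∑ t1, ∑ t2, ∑ t3, ∑ t4, if ((t4 : Z), (t1 : A)) = (c', a)
            then pmfOf μ (fun ω => (x ω, x' ω, f (x ω) (ε ω), f (x' ω) (ε' ω))) (t1, t2, t3, t4)
            else 0 :=
      pmfOf_comp4 (fun ω => (x ω, x' ω, f (x ω) (ε ω), f (x' ω) (ε' ω)))
        (fun t => (t.2.2.2, t.1)) (c', a)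
    rw [e1]
    simp only [Prod.mk.injEq, ite_and, hW]
    simp [Finset.sum_ite_eq']
    refine Finset.sum_congr rfl fun t2 _ => ?_
    rw [← Finset.sum_mul, ← Finset.mul_sum, hsum_g a, mul_one]
    ring
  -- conditional independence facts
  have C1 : cmi μ x' (fun ω => f (x ω) (ε ω)) x = 0 := by
    refine cmi_eq_zero hμ0 fun a0 b0 c0 => ?_
    show pmfOf μ (fun ω => (x' ω, f (x ω) (ε ω), x ω)) (a0, b0, c0) * pmfOf μ x c0
        = pmfOf μ (fun ω => (x' ω, x ω)) (a0, c0) *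
          pmfOf μ (fun ω => (f (x ω) (ε ω), x ω)) (b0, c0)
    rw [L6 a0 b0 c0, hx'x a0 c0, L5 b0 c0]
    ring
  have C2 : cmi μ (fun ω => f (x ω) (ε ω)) (fun ω => f (x' ω) (ε' ω)) x' = 0 := by
    refine cmi_eq_zero hμ0 fun a0 b0 c0 => ?_
    show pmfOf μ (fun ω => (f (x ω) (ε ω), f (x' ω) (ε' ω), x' ω)) (a0, b0, c0) *
          pmfOf μ x' c0
        = pmfOf μ (fun ω => (f (x ω) (ε ω), x' ω)) (a0, c0) *
          pmfOf μ (fun ω => (f (x' ω) (ε' ω), x' ω)) (b0, c0)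
    rw [L9 a0 b0 c0, L8 a0 c0, L7 b0 c0]
    ring
  have C3 : cmi μ x (fun ω => f (x' ω) (ε' ω)) x' = 0 := by
    refine cmi_eq_zero hμ0 fun a0 b0 c0 => ?_
    show pmfOf μ (fun ω => (x ω, f (x' ω) (ε' ω), x' ω)) (a0, b0, c0) * pmfOf μ x' c0
        = pmfOf μ (fun ω => (x ω, x' ω)) (a0, c0) *
          pmfOf μ (fun ω => (f (x' ω) (ε' ω), x' ω)) (b0, c0)
    rw [L10 a0 b0 c0, L7 b0 c0]
    ring
  have C4 : cmi μ (fun ω => f (x' ω) (ε' ω)) (fun ω => f (x ω) (ε ω)) x = 0 := by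
    refine cmi_eq_zero hμ0 fun a0 b0 c0 => ?_
    show pmfOf μ (fun ω => (f (x' ω) (ε' ω), f (x ω) (ε ω), x ω)) (a0, b0, c0) *
          pmfOf μ x c0
        = pmfOf μ (fun ω => (f (x' ω) (ε' ω), x ω)) (a0, c0) *
          pmfOf μ (fun ω => (f (x ω) (ε ω), x ω)) (b0, c0)
    rw [L12 a0 b0 c0, L13 a0 c0, L5 b0 c0]
    ring
  -- chain rule decompositions
  have ch1 : mi μ x' (fun ω => (x ω, f (x ω) (ε ω)))
      = mi μ x' (fun ω => f (x ω) (ε ω)) + cmi μ x' x (fun ω => f (x ω) (ε ω)) :=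
    mi_chain hμ0 x' x (fun ω => f (x ω) (ε ω))
  have ch2 : mi μ x' (fun ω => (f (x ω) (ε ω), x ω))
      = mi μ x' x + cmi μ x' (fun ω => f (x ω) (ε ω)) x :=
    mi_chain hμ0 x' (fun ω => f (x ω) (ε ω)) x
  have pc1 : mi μ x' (fun ω => (x ω, f (x ω) (ε ω)))
      = mi μ x' (fun ω => (f (x ω) (ε ω), x ω)) :=
    mi_pair_comm x' x (fun ω => f (x ω) (ε ω))
  have ch3 : mi μ (fun ω => f (x ω) (ε ω)) (fun ω => (f (x' ω) (ε' ω), x' ω))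
      = mi μ (fun ω => f (x ω) (ε ω)) x'
        + cmi μ (fun ω => f (x ω) (ε ω)) (fun ω => f (x' ω) (ε' ω)) x' :=
    mi_chain hμ0 (fun ω => f (x ω) (ε ω)) (fun ω => f (x' ω) (ε' ω)) x'
  have ch4 : mi μ (fun ω => f (x ω) (ε ω)) (fun ω => (x' ω, f (x' ω) (ε' ω)))
      = mi μ (fun ω => f (x ω) (ε ω)) (fun ω => f (x' ω) (ε' ω))
        + cmi μ (fun ω => f (x ω) (ε ω)) x' (fun ω => f (x' ω) (ε' ω)) :=
    mi_chain hμ0 (fun ω => f (x ω) (ε ω)) x' (fun ω => f (x' ω) (ε' ω))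
  have pc2 : mi μ (fun ω => f (x ω) (ε ω)) (fun ω => (f (x' ω) (ε' ω), x' ω))
      = mi μ (fun ω => f (x ω) (ε ω)) (fun ω => (x' ω, f (x' ω) (ε' ω))) :=
    mi_pair_comm (fun ω => f (x ω) (ε ω)) (fun ω => f (x' ω) (ε' ω)) x'
  have ch5 : mi μ x (fun ω => (x' ω, f (x' ω) (ε' ω)))
      = mi μ x (fun ω => f (x' ω) (ε' ω)) + cmi μ x x' (fun ω => f (x' ω) (ε' ω)) :=
    mi_chain hμ0 x x' (fun ω => f (x' ω) (ε' ω))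
  have ch6 : mi μ x (fun ω => (f (x' ω) (ε' ω), x' ω))
      = mi μ x x' + cmi μ x (fun ω => f (x' ω) (ε' ω)) x' :=
    mi_chain hμ0 x (fun ω => f (x' ω) (ε' ω)) x'
  have pc3 : mi μ x (fun ω => (x' ω, f (x' ω) (ε' ω)))
      = mi μ x (fun ω => (f (x' ω) (ε' ω), x' ω)) :=
    mi_pair_comm x x' (fun ω => f (x' ω) (ε' ω))
  have ch7 : mi μ (fun ω => f (x' ω) (ε' ω)) (fun ω => (f (x ω) (ε ω), x ω))
      = mi μ (fun ω => f (x' ω) (ε' ω)) x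
        + cmi μ (fun ω => f (x' ω) (ε' ω)) (fun ω => f (x ω) (ε ω)) x :=
    mi_chain hμ0 (fun ω => f (x' ω) (ε' ω)) (fun ω => f (x ω) (ε ω)) x
  have ch8 : mi μ (fun ω => f (x' ω) (ε' ω)) (fun ω => (x ω, f (x ω) (ε ω)))
      = mi μ (fun ω => f (x' ω) (ε' ω)) (fun ω => f (x ω) (ε ω))
        + cmi μ (fun ω => f (x' ω) (ε' ω)) x (fun ω => f (x ω) (ε ω)) :=
    mi_chain hμ0 (fun ω => f (x' ω) (ε' ω)) x (fun ω => f (x ω) (ε ω))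
  have pc4 : mi μ (fun ω => f (x' ω) (ε' ω)) (fun ω => (f (x ω) (ε ω), x ω))
      = mi μ (fun ω => f (x' ω) (ε' ω)) (fun ω => (x ω, f (x ω) (ε ω))) :=
    mi_pair_comm (fun ω => f (x' ω) (ε' ω)) (fun ω => f (x ω) (ε ω)) x
  have nn1 : 0 ≤ cmi μ (fun ω => f (x ω) (ε ω)) x' (fun ω => f (x' ω) (ε' ω)) :=
    cmi_nonneg ⟨hμ0, hμ1⟩ _ _ _
  have nn2 : 0 ≤ cmi μ (fun ω => f (x' ω) (ε' ω)) x (fun ω => f (x ω) (ε ω)) :=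
    cmi_nonneg ⟨hμ0, hμ1⟩ _ _ _
  have cc1 : cmi μ x' x (fun ω => f (x ω) (ε ω)) = cmi μ x x' (fun ω => f (x ω) (ε ω)) :=
    cmi_comm x' x (fun ω => f (x ω) (ε ω))
  have m1 : mi μ x x' = mi μ x' x := mi_comm x x'
  have m2 : mi μ x' (fun ω => f (x ω) (ε ω)) = mi μ (fun ω => f (x ω) (ε ω)) x' :=
    mi_comm x' (fun ω => f (x ω) (ε ω))
  have m3 : mi μ x (fun ω => f (x' ω) (ε' ω)) = mi μ (fun ω => f (x' ω) (ε' ω)) x :=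
    mi_comm x (fun ω => f (x' ω) (ε' ω))
  have m4 : mi μ (fun ω => f (x ω) (ε ω)) (fun ω => f (x' ω) (ε' ω))
      = mi μ (fun ω => f (x' ω) (ε' ω)) (fun ω => f (x ω) (ε ω)) :=
    mi_comm (fun ω => f (x ω) (ε ω)) (fun ω => f (x' ω) (ε' ω))
  constructor
  · linarith [ch1, ch2, pc1, C1, cc1, ch3, ch4, pc2, C2, nn1, m1, m2]
  · linarith [ch5, ch6, pc3, C3, ch7, ch8, pc4, C4, nn2, m1, m3, m4]
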